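/- For every n ≥ 1 one has τₙ ∘ σ₀ = σₙ ∘ τ_{n+1}² as linear maps H^{⊗(n+1)} → H^{⊗n}. -/

import Mathlib

/-!
Let `H` be a Hopf algebra over `ℂ` with coproduct `Δ = Coalgebra.comul`, counit
`ε = Coalgebra.counit`, antipode `S = HopfAlgebra.antipode` and unit `1`.  We fix a
character `δ : H →ₐ[ℂ] ℂ`.  The `δ`-twisted antipode is the linear map
`S̃(h) = ∑ δ(h₍₁₎) S(h₍₂₎)`.
-/

open TensorProduct

noncomputable section

variable (H : Type) [Ring H] [HopfAlgebra ℂ H]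

/-- The `δ`-twisted antipode `S̃(h) = ∑ δ(h₍₁₎) S(h₍₂₎)`. -/
def twistedAntipode (δ : H →ₐ[ℂ] ℂ) : H →ₗ[ℂ] H :=
  (TensorProduct.lid ℂ H).toLinearMap ∘ₗ
    (TensorProduct.map δ.toLinearMap (HopfAlgebra.antipode (R := ℂ))) ∘ₗ
      Coalgebra.comul

/-- A type bundled with a `ℂ`-algebra structure (used to form iterated tensor powers). -/
structure AlgPack : Type 1 where
  carrier : Type
  [ring : Ring carrier]
  [alg : Algebra ℂ carrier]

attribute [instance] AlgPack.ring AlgPack.alg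

/-- The iterated tensor powers of `H`: `XB H n` bundles `H^{⊗(n+1)}` together with its
(componentwise) algebra structure coming from `Algebra.TensorProduct`. -/
def XB : ℕ → AlgPack
  | 0 => ⟨H⟩
  | n + 1 => ⟨H ⊗[ℂ] (XB n).carrier⟩

/-- `X H n` is the tensor power `H^{⊗(n+1)}`; its multiplication `*` is the componentwise
product and its unit `1` is `1 ⊗ ... ⊗ 1`. -/
abbrev X (n : ℕ) : Type := (XB H n).carrier

/-- The pure tensor `h 0 ⊗ h 1 ⊗ ... ⊗ h n ∈ H^{⊗(n+1)}`. -/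
def tp : ∀ n, (Fin (n + 1) → H) → X H n
  | 0, h => h 0
  | n + 1, h => h 0 ⊗ₜ[ℂ] tp n (Fin.tail h)

/-- The `n`-fold iterated coproduct `Δ⁽ⁿ⁾ : H →ₗ H^{⊗(n+1)}`. -/
def Δiter : ∀ n, H →ₗ[ℂ] X H n
  | 0 => LinearMap.id
  | n + 1 => (TensorProduct.map LinearMap.id (Δiter n)) ∘ₗ Coalgebra.comul

/-- The face operators `δᵢ : H^{⊗(n+1)} →ₗ H^{⊗(n+2)}` (`0 ≤ i ≤ n + 2`):
`δ₀ = 1 ⊗ ·`, `δⱼ` applies `Δ` to the `j`-th factor for `1 ≤ j ≤ n + 1`, and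
`δ_{n+2}` appends `1` on the right. -/
def dX : ℕ → ∀ n, X H n →ₗ[ℂ] X H (n + 1)
  | 0, n => TensorProduct.mk ℂ H (X H n) 1
  | 1, 0 => (Coalgebra.comul : H →ₗ[ℂ] H ⊗[ℂ] H)
  | 1, n + 1 => (TensorProduct.assoc ℂ H H (X H n)).toLinearMap ∘ₗ
      (TensorProduct.map Coalgebra.comul LinearMap.id)
  | _ + 2, 0 => (TensorProduct.mk ℂ H H).flip 1
  | i + 2, n + 1 => TensorProduct.map LinearMap.id (dX (i + 1) n)

/-- The degeneracy operators `σᵢ : H^{⊗(n+2)} →ₗ H^{⊗(n+1)}` (`0 ≤ i ≤ n + 1`):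
`σᵢ` applies the counit `ε` to the `(i+1)`-st factor. -/
def sX : ℕ → ∀ n, X H (n + 1) →ₗ[ℂ] X H n
  | 0, n => (TensorProduct.lid ℂ (X H n)).toLinearMap ∘ₗ
      TensorProduct.map Coalgebra.counit LinearMap.id
  | _ + 1, 0 => (TensorProduct.rid ℂ H).toLinearMap ∘ₗ
      TensorProduct.map LinearMap.id (Coalgebra.counit : H →ₗ[ℂ] ℂ)
  | i + 1, n + 1 => TensorProduct.map LinearMap.id (sX i n)

/-- Appending `1 ∈ H` on the right: `h¹ ⊗ ... ⊗ h^{n+1} ↦ h¹ ⊗ ... ⊗ h^{n+1} ⊗ 1`. -/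
def appOne : ∀ n, X H n →ₗ[ℂ] X H (n + 1)
  | 0 => (TensorProduct.mk ℂ H H).flip 1
  | n + 1 => TensorProduct.map LinearMap.id (appOne n)

/-- The cyclic operator `τₙ : H^{⊗n} →ₗ H^{⊗n}` (here at index `X H n = H^{⊗(n+1)}`):
`τ(h¹ ⊗ ... ⊗ h^{n+1}) = Δ⁽ⁿ⁾(S̃(h¹)) · (h² ⊗ ... ⊗ h^{n+1} ⊗ 1)`,
where `·` is the componentwise product of `H^{⊗(n+1)}`. -/
def tauX (δ : H →ₐ[ℂ] ℂ) : ∀ n, X H n →ₗ[ℂ] X H n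
  | 0 => twistedAntipode H δ
  | n + 1 => LinearMap.mul' ℂ (X H (n + 1)) ∘ₗ
      TensorProduct.map (Δiter H (n + 1) ∘ₗ twistedAntipode H δ) (appOne H n)


/-!
`σₙ` is an algebra map that fixes the iterated coproducts and undoes the appending of `1`, so
`σₙ ∘ τ_{n+1}` is the contraction `G(h ⊗ t) = Δ⁽ⁿ⁻¹⁾(S̃ h) · t`. Since `S̃` is
anti-multiplicative and `∑ S̃(x₍₁₎) x₍₂₎ = δ(x) 1`, the contraction satisfies
`G(Δ⁽ⁿ⁾(x) · u) = δ(x) G(u)`. Applied to `τ_{n+1}(h ⊗ t) = Δ⁽ⁿ⁾(S̃ h) · (t ⊗ 1)`, together with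
`δ ∘ S̃ = ε` and `G(t ⊗ 1) = τₙ(t)`, this gives `G ∘ τ_{n+1} = τₙ ∘ σ₀`.
-/

open Coalgebra HopfAlgebra WithConv

section TwistedAntipode

variable {H} (δ : H →ₐ[ℂ] ℂ)

theorem toConv_twistedAntipode :
    toConv (twistedAntipode H δ) =
      toConv (Algebra.linearMap ℂ H ∘ₗ δ.toLinearMap) * toConv (antipode ℂ) := by
  have : (TensorProduct.lid ℂ H).toLinearMap ∘ₗ TensorProduct.map δ.toLinearMap (antipode ℂ) =
      LinearMap.mul' ℂ H ∘ₗ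
        TensorProduct.map (Algebra.linearMap ℂ H ∘ₗ δ.toLinearMap) (antipode ℂ) := by
    ext a b
    simp [Algebra.smul_def]
  rw [LinearMap.convMul_def, twistedAntipode, ← LinearMap.comp_assoc, this, LinearMap.comp_assoc]

theorem twistedAntipode_mul_id :
    toConv (twistedAntipode H δ) * toConv LinearMap.id =
      toConv (Algebra.linearMap ℂ H ∘ₗ δ.toLinearMap) := by
  rw [toConv_twistedAntipode, mul_assoc, LinearMap.antipode_mul_id, mul_one]

theorem sum_twistedAntipode_mul_eq_algebraMap {x : H} {ι : Type*} (r : Repr ℂ x ι) :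
    ∑ i ∈ r.index, twistedAntipode H δ (r.left i) * r.right i = algebraMap ℂ H (δ x) := by
  have := r.convMul_apply (toConv (twistedAntipode H δ)) (toConv LinearMap.id)
  rw [twistedAntipode_mul_id] at this
  exact this.symm

theorem apply_twistedAntipode_eq_counit (h : H) : δ (twistedAntipode H δ h) = counit h := by
  have := (ℛ ℂ h).convMul_apply (toConv (Algebra.linearMap ℂ H ∘ₗ δ.toLinearMap))
    (toConv (antipode ℂ))
  rw [← toConv_twistedAntipode] at this
  calc δ (twistedAntipode H δ h)
      = δ (∑ i ∈ (ℛ ℂ h).index, (ℛ ℂ h).left i * antipode ℂ ((ℛ ℂ h).right i)) := by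
        simp [this]
    _ = counit h := by simp [sum_mul_antipode_eq_algebraMap_counit]

theorem twistedAntipode_mul_antidistrib (a b : H) :
    twistedAntipode H δ (a * b) = twistedAntipode H δ b * twistedAntipode H δ a := by
  -- `S̃ = S ∘ θ`, where `θ(h) = ∑ δ(h₍₁₎) h₍₂₎` is an algebra endomorphism.
  let θ : H →ₐ[ℂ] H := (Algebra.TensorProduct.lid ℂ H).toAlgHom.comp
    ((Algebra.TensorProduct.map δ (AlgHom.id ℂ H)).comp (Bialgebra.comulAlgHom ℂ H))
  have hθ : twistedAntipode H δ = antipode ℂ ∘ₗ θ.toLinearMap := by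
    have : (TensorProduct.lid ℂ H).toLinearMap ∘ₗ TensorProduct.map δ.toLinearMap (antipode ℂ) =
        antipode ℂ ∘ₗ (TensorProduct.lid ℂ H).toLinearMap ∘ₗ
          TensorProduct.map δ.toLinearMap LinearMap.id := by
      ext a b
      simp
    rw [twistedAntipode, ← LinearMap.comp_assoc, this]
    rfl
  simp [hθ, antipode_mul_antidistrib]

end TwistedAntipode

section Contraction

variable {H} (δ : H →ₐ[ℂ] ℂ) {A : Type*} [Ring A] [Algebra ℂ A] (φ : H →ₐ[ℂ] A)

def twistedContract : H ⊗[ℂ] A →ₗ[ℂ] A :=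
  LinearMap.mul' ℂ A ∘ₗ TensorProduct.map (φ.toLinearMap ∘ₗ twistedAntipode H δ) LinearMap.id

theorem twistedContract_tmul (a : H) (t : A) :
    twistedContract δ φ (a ⊗ₜ t) = φ (twistedAntipode H δ a) * t := rfl

theorem twistedContract_comp_mulLeft (x : H) :
    twistedContract δ φ ∘ₗ
        LinearMap.mulLeft ℂ (TensorProduct.map LinearMap.id φ.toLinearMap (comul x)) =
      δ x • twistedContract δ φ := by
  let r := ℛ ℂ x
  refine TensorProduct.ext' fun a t => ?_
  calc twistedContract δ φ (TensorProduct.map LinearMap.id φ.toLinearMap (comul x) * a ⊗ₜ t)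
      = ∑ i ∈ r.index, φ (twistedAntipode H δ (r.left i * a)) * (φ (r.right i) * t) := by
        simp [← r.eq, Finset.sum_mul, twistedContract_tmul]
    _ = φ (twistedAntipode H δ a) *
          φ (∑ i ∈ r.index, twistedAntipode H δ (r.left i) * r.right i) * t := by
        simp only [twistedAntipode_mul_antidistrib, map_mul, map_sum, Finset.mul_sum,
          Finset.sum_mul, mul_assoc]
    _ = δ x • twistedContract δ φ (a ⊗ₜ t) := by
        rw [sum_twistedAntipode_mul_eq_algebraMap, AlgHom.commutes, twistedContract_tmul,
          mul_assoc, Algebra.algebraMap_eq_smul_one, smul_mul_assoc, one_mul, mul_smul_comm]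

end Contraction

section TensorPower

def ΔiterAlgHom : ∀ m, H →ₐ[ℂ] X H m
  | 0 => AlgHom.id ℂ H
  | m + 1 => (Algebra.TensorProduct.map (AlgHom.id ℂ H) (ΔiterAlgHom m)).comp
      (Bialgebra.comulAlgHom ℂ H)

def sXLastAlgHom : ∀ m, X H (m + 1) →ₐ[ℂ] X H m
  | 0 => (Algebra.TensorProduct.rid ℂ ℂ H).toAlgHom.comp
      (Algebra.TensorProduct.map (AlgHom.id ℂ H) (Bialgebra.counitAlgHom ℂ H))
  | m + 1 => Algebra.TensorProduct.map (AlgHom.id ℂ H) (sXLastAlgHom m)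

variable {H}

theorem toLinearMap_ΔiterAlgHom : ∀ m, (ΔiterAlgHom H m).toLinearMap = Δiter H m
  | 0 => rfl
  | m + 1 => congrArg (TensorProduct.map LinearMap.id · ∘ₗ comul) (toLinearMap_ΔiterAlgHom m)

theorem toLinearMap_sXLastAlgHom : ∀ m, (sXLastAlgHom H m).toLinearMap = sX H (m + 1) m
  | 0 => TensorProduct.ext' fun _ _ => rfl
  | m + 1 => congrArg (TensorProduct.map LinearMap.id) (toLinearMap_sXLastAlgHom m)

theorem sX_last_comp_mul' (m : ℕ) :
    sX H (m + 1) m ∘ₗ LinearMap.mul' ℂ (X H (m + 1)) =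
      LinearMap.mul' ℂ (X H m) ∘ₗ TensorProduct.map (sX H (m + 1) m) (sX H (m + 1) m) := by
  rw [← toLinearMap_sXLastAlgHom]
  exact AlgHom.comp_mul' (sXLastAlgHom H m)

theorem sX_last_comp_appOne : ∀ m, sX H (m + 1) m ∘ₗ appOne H m = LinearMap.id
  | 0 => LinearMap.ext fun (h : H) => by
    change TensorProduct.rid ℂ H (h ⊗ₜ counit (1 : H)) = h
    simp
  | m + 1 => by
    change TensorProduct.map LinearMap.id (sX H (m + 1) m) ∘ₗ
      TensorProduct.map LinearMap.id (appOne H m) = LinearMap.id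
    rw [← TensorProduct.map_comp, sX_last_comp_appOne m, LinearMap.comp_id, TensorProduct.map_id]

theorem sX_last_comp_Δiter : ∀ m, sX H (m + 1) m ∘ₗ Δiter H (m + 1) = Δiter H m
  | 0 => by
    ext h
    change TensorProduct.rid ℂ H
      (counit.lTensor H (TensorProduct.map LinearMap.id LinearMap.id (comul h))) = h
    simp
  | m + 1 => by
    change TensorProduct.map LinearMap.id (sX H (m + 1) m) ∘ₗ
        TensorProduct.map LinearMap.id (Δiter H (m + 1)) ∘ₗ comul =
      TensorProduct.map LinearMap.id (Δiter H m) ∘ₗ comul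
    rw [← LinearMap.comp_assoc, ← TensorProduct.map_comp, sX_last_comp_Δiter m, LinearMap.comp_id]

theorem sX_zero_tmul (m : ℕ) (a : H) (t : X H m) :
    sX H 0 m (a ⊗ₜ t) = counit (R := ℂ) a • t := rfl

end TensorPower

section Cyclic

variable {H} (δ : H →ₐ[ℂ] ℂ)

def twistedContractX (m : ℕ) : X H (m + 1) →ₗ[ℂ] X H m := twistedContract δ (ΔiterAlgHom H m)

theorem twistedContractX_comp_mulLeft (m : ℕ) (x : H) :
    twistedContractX δ m ∘ₗ LinearMap.mulLeft ℂ (Δiter H (m + 1) x) =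
      δ x • twistedContractX δ m := by
  have hΔ : Δiter H (m + 1) x =
      TensorProduct.map LinearMap.id (ΔiterAlgHom H m).toLinearMap (comul x) := by
    rw [toLinearMap_ΔiterAlgHom]; rfl
  rw [hΔ]
  exact twistedContract_comp_mulLeft δ (ΔiterAlgHom H m) x

theorem sX_last_comp_tauX (m : ℕ) :
    sX H (m + 1) m ∘ₗ tauX H δ (m + 1) = twistedContractX δ m := by
  change sX H (m + 1) m ∘ₗ LinearMap.mul' ℂ (X H (m + 1)) ∘ₗ
    TensorProduct.map (Δiter H (m + 1) ∘ₗ twistedAntipode H δ) (appOne H m) = _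
  rw [← LinearMap.comp_assoc, sX_last_comp_mul', LinearMap.comp_assoc, ← TensorProduct.map_comp,
    ← LinearMap.comp_assoc, sX_last_comp_Δiter, sX_last_comp_appOne, twistedContractX,
    twistedContract, toLinearMap_ΔiterAlgHom]

theorem twistedContractX_comp_appOne : ∀ m, twistedContractX δ m ∘ₗ appOne H m = tauX H δ m
  | 0 => LinearMap.ext fun (h : H) => mul_one (twistedAntipode H δ h)
  | m + 1 => by
    change (LinearMap.mul' ℂ (X H (m + 1)) ∘ₗ
        TensorProduct.map ((ΔiterAlgHom H (m + 1)).toLinearMap ∘ₗ twistedAntipode H δ)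
          LinearMap.id) ∘ₗ TensorProduct.map LinearMap.id (appOne H m) = _
    rw [LinearMap.comp_assoc, ← TensorProduct.map_comp, LinearMap.comp_id,
      LinearMap.id_comp, toLinearMap_ΔiterAlgHom]
    rfl

theorem twistedContractX_comp_tauX (m : ℕ) :
    twistedContractX δ m ∘ₗ tauX H δ (m + 1) = tauX H δ m ∘ₗ sX H 0 m := by
  refine TensorProduct.ext' fun h t => ?_
  change (twistedContractX δ m ∘ₗ LinearMap.mulLeft ℂ (Δiter H (m + 1) (twistedAntipode H δ h)))
    (appOne H m t) = tauX H δ m (sX H 0 m (h ⊗ₜ t))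
  rw [twistedContractX_comp_mulLeft, LinearMap.smul_apply, ← LinearMap.comp_apply,
    twistedContractX_comp_appOne, apply_twistedAntipode_eq_counit, sX_zero_tmul, map_smul]

end Cyclic

/-- Here `n = m + 1`: `X H m = H^{⊗n}` and `σₙ = sX H (m + 1) m`. -/
theorem tauX_comp_s0 (δ : H →ₐ[ℂ] ℂ) :
    ∀ m : ℕ,
      tauX H δ m ∘ₗ sX H 0 m =
        sX H (m + 1) m ∘ₗ (tauX H δ (m + 1) ∘ₗ tauX H δ (m + 1)) := by
  intro m
  rw [← twistedContractX_comp_tauX, ← sX_last_comp_tauX, LinearMap.comp_assoc]
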